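/- arXiv:2206.01564 — 2 statements merged into one kernel-verified Lean document; each statement's English description precedes it below -/
import Mathlib

section
/- Let R be a commutative ring. Consider the set Disc(R) of isomorphism classes of pairs (M, φ) where M is an invertible (rank-one projective) R-module and φ : R ≅ M ⊗ M is an isomorphism, with group law induced by tensor product. Then there is a short exact sequence of abelian groups 0 → R^×/(R^×)^2 → Disc(R) → Pic(R)[2] → 0, where the first map sends a unit u to (R, multiplication by u) and the second sends (M, φ) to the class of M, and Pic(R)[2] denotes the 2-torsion subgroup of the Picard group. -/
/-!
Every linear automorphism of `R` is multiplication by a unit `w`, and it transports the pair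
`(R, ·u)` to `(R, ·u w²)`; hence pairs on `R` are classified by `R^×/(R^×)²`, and a
trivialisation `M ≅ R` transports any pair `(M, φ)` to one of them.
-/

open TensorProduct

/-- An `R`-module is invertible if it admits a tensor inverse (equivalently, it is a rank-one
finitely generated projective module). -/
def IsInvertibleModule (R : Type) [CommRing R] (M : Type) [AddCommGroup M] [Module R M] :
    Prop :=
  ∃ N : ModuleCat.{0} R, Nonempty ((M ⊗[R] N) ≃ₗ[R] R)

/-- Multiplication by a unit `u`, as a linear automorphism of `R`. -/
noncomputable def mulUnit (R : Type) [CommRing R] (u : Rˣ) : R ≃ₗ[R] R :=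
  LinearEquiv.ofLinear (LinearMap.toSpanSingleton R R (u : R))
    (LinearMap.toSpanSingleton R R ((u⁻¹ : Rˣ) : R))
    (by ext; simp [smul_eq_mul, mul_assoc])
    (by ext; simp [smul_eq_mul, mul_assoc])

/-- The pair `(R, multiplication by u)`: the isomorphism `R ≅ R ⊗ R`, `x ↦ (x·u) ⊗ 1`. -/
noncomputable def unitPair (R : Type) [CommRing R] (u : Rˣ) : R ≃ₗ[R] R ⊗[R] R :=
  (mulUnit R u).trans (TensorProduct.lid R R).symm

/-- Isomorphism of pairs `(M, φ)` and `(N, ψ)`: a linear isomorphism `e : M → N` with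
`(e ⊗ e) ∘ φ = ψ`. -/
def PairIso (R : Type) [CommRing R] {M N : Type} [AddCommGroup M] [Module R M]
    [AddCommGroup N] [Module R N]
    (φ : R ≃ₗ[R] M ⊗[R] M) (ψ : R ≃ₗ[R] N ⊗[R] N) : Prop :=
  ∃ e : M ≃ₗ[R] N, ∀ x : R, TensorProduct.congr e e (φ x) = ψ x

/-- The tensor product of two pairs `(M, φ)` and `(N, ψ)`: the underlying module is
`M ⊗ N` and the isomorphism `R ≅ (M ⊗ N) ⊗ (M ⊗ N)` is induced by `φ ⊗ ψ` and the shuffle. -/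
noncomputable def tensorPair (R : Type) [CommRing R] {M N : Type}
    [AddCommGroup M] [Module R M] [AddCommGroup N] [Module R N]
    (φ : R ≃ₗ[R] M ⊗[R] M) (ψ : R ≃ₗ[R] N ⊗[R] N) :
    R ≃ₗ[R] (M ⊗[R] N) ⊗[R] (M ⊗[R] N) :=
  ((TensorProduct.lid R R).symm.trans (TensorProduct.congr φ ψ)).trans
    (TensorProduct.tensorTensorTensorComm R M M N N)

section

variable {R : Type} [CommRing R]

lemma mulUnit_apply (u : Rˣ) (x : R) : mulUnit R u x = x * u := by
  simp [mulUnit, smul_eq_mul]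

lemma unitPair_apply (u : Rˣ) (x : R) : unitPair R u x = 1 ⊗ₜ[R] (x * u) := by
  simp [unitPair, mulUnit_apply]

lemma unitPair_injective : Function.Injective (unitPair R) := fun u v h => by
  have h1 := congr(TensorProduct.lid R R ($h 1))
  simpa [unitPair_apply, Units.ext_iff] using h1

lemma exists_mulUnit_eq (e : R ≃ₗ[R] R) : ∃ w : Rˣ, mulUnit R w = e := by
  have he : ∀ x, e x = x * e 1 := fun x => by
    rw [← smul_eq_mul, ← map_smul, smul_eq_mul, mul_one]
  refine ⟨Units.mkOfMulEqOne (e 1) (e.symm 1) ?_, ?_⟩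
  · rw [mul_comm, ← he, e.apply_symm_apply]
  · exact LinearEquiv.toLinearMap_injective (LinearMap.ext_ring (by simp [mulUnit_apply]))

lemma exists_unitPair_eq (ψ : R ≃ₗ[R] R ⊗[R] R) : ∃ u : Rˣ, unitPair R u = ψ := by
  obtain ⟨u, hu⟩ := exists_mulUnit_eq (ψ.trans (TensorProduct.lid R R))
  exact ⟨u, LinearEquiv.ext fun x => by simp [unitPair, hu]⟩

lemma congr_mulUnit_unitPair (w u : Rˣ) (x : R) :
    TensorProduct.congr (mulUnit R w) (mulUnit R w) (unitPair R u x) =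
      unitPair R (u * w * w) x := by
  apply (TensorProduct.lid R R).injective
  simp only [unitPair_apply, TensorProduct.congr_tmul, mulUnit_apply, TensorProduct.lid_tmul,
    smul_eq_mul, Units.val_mul]
  ring

lemma PairIso.symm {M N : Type} [AddCommGroup M] [Module R M] [AddCommGroup N] [Module R N]
    {φ : R ≃ₗ[R] M ⊗[R] M} {ψ : R ≃ₗ[R] N ⊗[R] N} : PairIso R φ ψ → PairIso R ψ φ := by
  rintro ⟨e, he⟩
  exact ⟨e.symm, fun x => by rw [← TensorProduct.congr_symm, LinearEquiv.symm_apply_eq, he]⟩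

lemma pairIso_unitPair_iff (u v : Rˣ) :
    PairIso R (unitPair R u) (unitPair R v) ↔ ∃ w : Rˣ, v = u * w * w := by
  constructor
  · rintro ⟨e, he⟩
    obtain ⟨w, rfl⟩ := exists_mulUnit_eq e
    exact ⟨w, unitPair_injective (LinearEquiv.ext fun x =>
      (he x).symm.trans (congr_mulUnit_unitPair w u x))⟩
  · rintro ⟨w, rfl⟩
    exact ⟨mulUnit R w, congr_mulUnit_unitPair w u⟩

lemma pairIso_unitPair_mul (u v : Rˣ) :
    PairIso R (unitPair R (u * v)) (tensorPair R (unitPair R u) (unitPair R v)) := by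
  refine ⟨(TensorProduct.lid R R).symm, fun x => ?_⟩
  simp only [tensorPair, LinearEquiv.trans_apply, TensorProduct.lid_symm_apply,
    TensorProduct.congr_tmul, unitPair_apply, one_mul, TensorProduct.tensorTensorTensorComm_tmul]
  congr 1
  apply (TensorProduct.lid R R).injective
  simp only [TensorProduct.lid_tmul, smul_eq_mul, Units.val_mul]
  ring

lemma nonempty_linearEquiv_iff_exists_pairIso_unitPair {M : Type} [AddCommGroup M] [Module R M]
    (φ : R ≃ₗ[R] M ⊗[R] M) : Nonempty (M ≃ₗ[R] R) ↔ ∃ u : Rˣ, PairIso R φ (unitPair R u) := by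
  constructor
  · rintro ⟨e⟩
    obtain ⟨u, hu⟩ := exists_unitPair_eq (φ.trans (TensorProduct.congr e e))
    exact ⟨u, e, fun x => by rw [hu]; rfl⟩
  · rintro ⟨_, e, _⟩
    exact ⟨e⟩

end

/-- The five conjuncts are, in order: injectivity of `R^×/(R^×)² → Disc(R)`; that this map is a
homomorphism; exactness at `Disc(R)`; that `Disc(R) → Pic(R)` lands in `Pic(R)[2]`; and
surjectivity onto `Pic(R)[2]`. -/
theorem disc_short_exact_sequence (R : Type) [CommRing R] :
    (∀ u v : Rˣ, PairIso R (unitPair R u) (unitPair R v) ↔ ∃ w : Rˣ, u = v * w * w) ∧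
    (∀ u v : Rˣ,
      PairIso R (unitPair R (u * v)) (tensorPair R (unitPair R u) (unitPair R v))) ∧
    (∀ (M : Type) [AddCommGroup M] [Module R M] (φ : R ≃ₗ[R] M ⊗[R] M),
      IsInvertibleModule R M →
      (Nonempty (M ≃ₗ[R] R) ↔ ∃ u : Rˣ, PairIso R φ (unitPair R u))) ∧
    (∀ (M : Type) [AddCommGroup M] [Module R M] (_φ : R ≃ₗ[R] M ⊗[R] M),
      IsInvertibleModule R M → Nonempty ((M ⊗[R] M) ≃ₗ[R] R)) ∧
    (∀ (M : Type) [AddCommGroup M] [Module R M], IsInvertibleModule R M →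
      Nonempty ((M ⊗[R] M) ≃ₗ[R] R) → ∃ _φ : R ≃ₗ[R] M ⊗[R] M, True) :=
  ⟨fun u v => Iff.trans ⟨PairIso.symm, PairIso.symm⟩ (pairIso_unitPair_iff v u),
    pairIso_unitPair_mul,
    fun _ _ _ φ _ => nonempty_linearEquiv_iff_exists_pairIso_unitPair φ,
    fun _ _ _ φ _ => ⟨φ.symm⟩,
    fun _ _ _ _ ⟨e⟩ => ⟨e.symm, trivial⟩⟩
end

section
/- Let Z_ε = ℤ[ε]/(ε^2 − 1) and h = 1 + ε. Let M be the 8 × 8 matrix over Z_ε given by M = A − h·I, where A is the adjacency matrix of the E_8 Dynkin tree with vertices 1,...,8, edges {1,2}, {2,3}, {3,4}, {4,5}, {5,6}, {6,7} and {5,8}. Then M is invertible over Z_ε. -/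
/-- The ring `ℤ[ε]/(ε² − 1)`, realized as `ℤ[X]/(X² − 1)`. -/
abbrev Zeps : Type := Polynomial ℤ ⧸ Ideal.span {(Polynomial.X : Polynomial ℤ) ^ 2 - 1}

/-- The class `ε` of `X` in `ℤ[X]/(X² − 1)`. -/
noncomputable def eps : Zeps := Ideal.Quotient.mk _ Polynomial.X

/-- The hyperbolic element `h = 1 + ε`. -/
noncomputable def hq : Zeps := 1 + eps

/-- The 0-1 adjacency matrix of the `E₈` Dynkin tree on vertices `0,…,7` (1-indexed `1,…,8`),
with edges `{1,2},{2,3},{3,4},{4,5},{5,6},{6,7},{5,8}` (0-indexed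
`(0,1),(1,2),(2,3),(3,4),(4,5),(5,6),(4,7)`). -/
noncomputable def E8adj : Matrix (Fin 8) (Fin 8) Zeps := fun i j =>
  if ((i.val, j.val) ∈
      [(0,1),(1,2),(2,3),(3,4),(4,5),(5,6),(4,7),
       (1,0),(2,1),(3,2),(4,3),(5,4),(6,5),(7,4)] : Prop) then 1 else 0

/-!
The determinant `det (A − x·I)` is `p(x) = x⁸ − 7x⁶ + 14x⁴ − 8x² + 1`. Since
`p(0) = p(2) = 1` (the adjacency matrix and the Cartan matrix `2I − A` of `E₈` are unimodular),
`p(X) − 1` is divisible by `X(X − 2)`. As `ε² = 1`, the element `h = 1 + ε` satisfies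
`h(h − 2) = 0`, hence `det (A − h·I) = p(h) = 1`.
-/

theorem eps_sq : eps ^ 2 = 1 := by
  rw [eps, ← map_pow, ← map_one (Ideal.Quotient.mk _), Ideal.Quotient.eq]
  exact Ideal.subset_span rfl

theorem hq_sq : hq ^ 2 = 2 * hq := by
  rw [hq]
  linear_combination eps_sq

theorem det_E8adj_sub_smul_one (x : Zeps) :
    (E8adj - x • 1).det = x ^ 8 - 7 * x ^ 6 + 14 * x ^ 4 - 8 * x ^ 2 + 1 := by
  have E8adj_sub_smul_one : E8adj - x • 1 =
      !![-x, 1, 0, 0, 0, 0, 0, 0;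
          1, -x, 1, 0, 0, 0, 0, 0;
          0, 1, -x, 1, 0, 0, 0, 0;
          0, 0, 1, -x, 1, 0, 0, 0;
          0, 0, 0, 1, -x, 1, 0, 1;
          0, 0, 0, 0, 1, -x, 1, 0;
          0, 0, 0, 0, 0, 1, -x, 0;
          0, 0, 0, 0, 1, 0, 0, -x] := by
    ext i j
    fin_cases i <;> fin_cases j <;> simp [E8adj]
  rw [E8adj_sub_smul_one]
  eval_det
  ring

theorem E8_charpoly_eq_one_of_sq_eq_two_mul {R : Type*} [CommRing R] {x : R}
    (hx : x ^ 2 = 2 * x) : x ^ 8 - 7 * x ^ 6 + 14 * x ^ 4 - 8 * x ^ 2 + 1 = 1 := by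
  linear_combination (x ^ 6 + 2 * x ^ 5 - 3 * x ^ 4 - 6 * x ^ 3 + 2 * x ^ 2 + 4 * x) * hx

/-- The quadratic Mumford matrix `M = A − h·I` of the `E₈` Du Val singularity is invertible
over `Z_ε = ℤ[ε]/(ε² − 1)`. -/
theorem E8_mumford_matrix_isUnit :
    IsUnit (E8adj - hq • (1 : Matrix (Fin 8) (Fin 8) Zeps)).det := by
  rw [det_E8adj_sub_smul_one, E8_charpoly_eq_one_of_sq_eq_two_mul hq_sq]
  exact isUnit_one
end
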